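/- arXiv:2105.10964 — 3 statements merged into one kernel-verified Lean document; each statement's English description precedes it below -/
import Mathlib

section
/- Let G be a finite group, k a field of characteristic p, D a p-subgroup of G, and N a normal subgroup of G such that D is a Sylow p-subgroup of DN. Then the p'-part of the index |G : N_G(D)|, viewed as an element of k, equals the p'-part of the index |G/N : N_{G/N}(DN/N)| viewed as an element of k. -/
/-!
Put `B = N_G(DN)`. Preimages turn `N_{G/N}(DN/N)` into `B`, so the right-hand index is `|G : B|`,
and `N_G(D) ≤ B`. Since `DN` is normal in `B` and `D` is Sylow in `DN`, the Frattini argument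
identifies `|B : N_G(D)|` with the number of Sylow `p`-subgroups of `DN`, which is `≡ 1 (mod p)`.
Hence `|G : N_G(D)| = |B : N_G(D)| · |G : B|` has the same `p'`-part as `|G : B|` modulo `p`.
-/

open Subgroup

theorem Nat.cast_ordCompl_mul_of_modEq_one {R : Type*} [NonAssocSemiring R] {p a : ℕ} [CharP R p]
    (hp : p ≠ 1) (ha : a ≡ 1 [MOD p]) (b : ℕ) :
    ((ordCompl[p] (a * b) : ℕ) : R) = (ordCompl[p] b : ℕ) := by
  have hpa : ¬ p ∣ a := fun h =>
    hp (Nat.dvd_one.mp (Nat.modEq_zero_iff_dvd.mp (ha.symm.trans (Nat.modEq_zero_iff_dvd.mpr h))))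
  rw [Nat.ordCompl_mul, Nat.factorization_eq_zero_of_not_dvd hpa, pow_zero, Nat.div_one,
    Nat.cast_mul, CharP.natCast_eq_natCast' R p ha, Nat.cast_one, one_mul]

section

variable {G : Type*} [Group G]

theorem Subgroup.relIndex_eq_index_of_sup_eq_top {H K : Subgroup G} [K.Normal] [K.FiniteIndex]
    (h : H ⊔ K = ⊤) : H.relIndex K = H.index := by
  have hHK : H.relIndex K * K.index = (H ⊓ K).index := by
    simpa using relIndex_inf_mul_relIndex H K ⊤
  have hKH : K.relIndex H * H.index = (K ⊓ H).index := by
    simpa using relIndex_inf_mul_relIndex K H ⊤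
  have hKH' : K.relIndex H = K.index := by
    rw [← relIndex_sup_right, h, relIndex_top_right]
  refine Nat.eq_of_mul_eq_mul_right (Nat.pos_of_ne_zero (FiniteIndex.index_ne_zero (H := K))) ?_
  rw [hHK, inf_comm, ← hKH, hKH', mul_comm]

theorem Sylow.index_normalizer_map_subtype [Finite G] {p : ℕ} [Fact p.Prime] {K : Subgroup G} [K.Normal]
    (P : Sylow p K) :
    (normalizer ((P.map K.subtype : Subgroup G) : Set G)).index = Nat.card (Sylow p K) := by
  rw [← relIndex_eq_index_of_sup_eq_top (Sylow.normalizer_sup_eq_top P), relIndex,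
    subgroupOf_normalizer_eq (map_subtype_le _), P.card_eq_index_normalizer,
    subgroupOf, comap_map_eq_self_of_injective K.subtype_injective]
  rfl

theorem Subgroup.relIndex_normalizer_modEq_one [Finite G] {p : ℕ} [Fact p.Prime]
    {P K : Subgroup G} (hPK : P ≤ K) (hP : IsPGroup p P) (hindex : ¬ p ∣ P.relIndex K) :
    (normalizer (P : Set G)).relIndex (normalizer (K : Set G)) ≡ 1 [MOD p] := by
  set B := normalizer (K : Set G)
  set K' := K.subgroupOf B
  have hPB : P ≤ B := hPK.trans le_normalizer
  have hQ : IsPGroup p ((P.subgroupOf B).subgroupOf K') := hP.comap_subtype.comap_subtype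
  have hQ' : ¬ p ∣ ((P.subgroupOf B).subgroupOf K').index := by
    rwa [← relIndex, relIndex_subgroupOf le_normalizer]
  let Q : Sylow p K' := hQ.toSylow hQ'
  have hQmap : (Q.map K'.subtype : Subgroup B) = P.subgroupOf B := by
    rw [IsPGroup.toSylow_coe, subgroupOf_map_subtype, inf_of_le_left fun x hx => hPK hx]
  calc (normalizer (P : Set G)).relIndex B
      = (normalizer ((P.subgroupOf B : Subgroup B) : Set B)).index := by
        rw [relIndex, subgroupOf_normalizer_eq hPB]
    _ = Nat.card (Sylow p K') := by rw [← hQmap]; exact Q.index_normalizer_map_subtype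
    _ ≡ 1 [MOD p] := card_sylow_modEq_one p K'

theorem QuotientGroup.comap_normalizer_map_mk' (D N : Subgroup G) [N.Normal] :
    (normalizer ((D.map (mk' N) : Subgroup (G ⧸ N)) : Set (G ⧸ N))).comap (mk' N) =
      normalizer ((D ⊔ N : Subgroup G) : Set G) := by
  rw [comap_normalizer_eq_of_surjective _ (mk'_surjective N), comap_map_eq, ker_mk']

end

/-- For `G` finite, `k` a field of characteristic `p`, `D` a `p`-subgroup of `G`
and `N` normal with `D` a Sylow `p`-subgroup of `DN`, the `p'`-part of `|G : N_G(D)|`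
equals, in `k`, the `p'`-part of `|G/N : N_{G/N}(DN/N)|`. -/
theorem stmt_0 (p : ℕ) [Fact p.Prime] (k : Type*) [Field k] [CharP k p]
    (G : Type*) [Group G] [Fintype G] (D N : Subgroup G) [N.Normal]
    (hD : IsPGroup p D)
    (hSyl : ¬ p ∣ (D.subgroupOf (D ⊔ N)).index) :
    (((Subgroup.normalizer (D : Set G)).index / p ^ ((Subgroup.normalizer (D : Set G)).index).factorization p : ℕ) : k)
      = (((Subgroup.normalizer ((D.map (QuotientGroup.mk' N) : Subgroup (G ⧸ N)) : Set (G ⧸ N))).index /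
          p ^ ((Subgroup.normalizer ((D.map (QuotientGroup.mk' N) : Subgroup (G ⧸ N)) : Set (G ⧸ N))).index).factorization p : ℕ) : k) := by
  have hB := QuotientGroup.comap_normalizer_map_mk' D N
  have hle : normalizer (D : Set G) ≤ normalizer ((D ⊔ N : Subgroup G) : Set G) :=
    hB ▸ map_le_iff_le_comap.mp (le_normalizer_map _)
  rw [← index_comap_of_surjective _ (QuotientGroup.mk'_surjective N), hB,
    ← relIndex_mul_index hle]
  exact Nat.cast_ordCompl_mul_of_modEq_one (Fact.out : p.Prime).ne_one
    (relIndex_normalizer_modEq_one le_sup_left hD hSyl) _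
end

section
/- Let G be a finite group, p a prime, D a p-subgroup of G, and N a normal subgroup of G such that D is a Sylow p-subgroup of DN. The map from the set of G-conjugates of D to the set of G/N-conjugates of DN/N, sending gDg^{-1} to (gN)(DN/N)(gN)^{-1}, is surjective, and the fiber over (gN)(DN/N)(gN)^{-1} is exactly the set of Sylow p-subgroups of gDNg^{-1}. -/
open scoped Pointwise

/-!
Two subgroups have the same image in `G ⧸ N` iff their joins with `N` agree, and
`(gN)(DN/N)(gN)⁻¹` is the image of `gDg⁻¹`; so `xDx⁻¹` lies in the fiber iff
`xDx⁻¹ ⊔ N = g(D ⊔ N)`. In that case `g(D ⊔ N) = x(D ⊔ N)`, in which `xDx⁻¹` has the index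
`[D ⊔ N : D]`, prime to `p`. Conversely, if `H ≤ g(D ⊔ N)` has index prime to `p`, the index of
`H ⊔ N` in `g(D ⊔ N)` divides both that index and `[g(D ⊔ N) : N] = [gDg⁻¹ : gDg⁻¹ ⊓ N]`,
a power of `p`; hence `H ⊔ N = g(D ⊔ N)`.
-/

namespace Subgroup

variable {G : Type*} [Group G]

theorem map_conj_smul {G' : Type*} [Group G'] (f : G →* G') (x : G) (H : Subgroup G) :
    (MulAut.conj x • H).map f = MulAut.conj (f x) • H.map f := by
  ext y
  simp [mem_smul_pointwise_iff_exists, mem_map]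

theorem sup_eq_of_coprime_relIndex {H K L : Subgroup G} (hH : H ≤ L) (hK : K ≤ L)
    (hcop : (H.relIndex L).Coprime (K.relIndex L)) : H ⊔ K = L :=
  le_antisymm (sup_le hH hK) <| relIndex_eq_one.mp <| Nat.eq_one_of_dvd_coprimes hcop
    (relIndex_dvd_of_le_left L le_sup_left) (relIndex_dvd_of_le_left L le_sup_right)

end Subgroup

open Subgroup

theorem IsPGroup.sup_eq_of_not_dvd_relIndex {p : ℕ} [Fact p.Prime] {G : Type*} [Group G]
    [Finite G] {P N H : Subgroup G} [N.Normal] (hP : IsPGroup p P) (hH : H ≤ P ⊔ N)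
    (hind : ¬ p ∣ H.relIndex (P ⊔ N)) : H ⊔ N = P ⊔ N := by
  refine sup_eq_of_coprime_relIndex hH le_sup_right ?_
  obtain ⟨n, hn⟩ := hP.index (N.subgroupOf P)
  have hNP : N.relIndex (P ⊔ N) = p ^ n := (relIndex_sup_right P N).trans hn
  rw [hNP]
  exact (((Nat.Prime.coprime_iff_not_dvd Fact.out).mpr hind).pow_left n).symm

/-- For `D` a `p`-subgroup of the finite group `G` which is a Sylow `p`-subgroup
of `DN` (`N` normal), the map sending the `G`-conjugate `xDx⁻¹` of `D` to the `G/N`-conjugate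
`(gN)(DN/N)(gN)⁻¹` of `DN/N` is surjective, and the fiber over `(gN)(DN/N)(gN)⁻¹` consists
exactly of the Sylow `p`-subgroups of `gDNg⁻¹`. -/
theorem stmt_1 (p : ℕ) [Fact p.Prime] (G : Type*) [Group G] [Fintype G]
    (D N : Subgroup G) [N.Normal] (hD : IsPGroup p D)
    (hSyl : ¬ p ∣ (D.subgroupOf (D ⊔ N)).index) :
    (∀ g : G, ∃ x : G,
      Subgroup.map (QuotientGroup.mk' N) (MulAut.conj x • D)
        = MulAut.conj ((g : G ⧸ N)) • Subgroup.map (QuotientGroup.mk' N) D) ∧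
    (∀ g x : G,
      Subgroup.map (QuotientGroup.mk' N) (MulAut.conj x • D)
          = MulAut.conj ((g : G ⧸ N)) • Subgroup.map (QuotientGroup.mk' N) D
        ↔ (MulAut.conj x • D ≤ MulAut.conj g • (D ⊔ N) ∧
            ¬ p ∣ ((MulAut.conj x • D).subgroupOf (MulAut.conj g • (D ⊔ N))).index)) := by
  have hconj (g : G) : MulAut.conj g • (D ⊔ N) = MulAut.conj g • D ⊔ N := by
    rw [smul_sup, Normal.conj_smul_eq_self g N]
  refine ⟨fun g => ⟨g, map_conj_smul _ g D⟩, fun g x => ?_⟩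
  rw [← relIndex] at hSyl ⊢
  rw [← QuotientGroup.mk'_apply, ← map_conj_smul, map_eq_map_iff, QuotientGroup.ker_mk', hconj g]
  constructor
  · intro h
    rw [← h, ← hconj x, relIndex_pointwise_smul]
    exact ⟨pointwise_smul_le_pointwise_smul_iff.mpr le_sup_left, hSyl⟩
  · rintro ⟨hle, hind⟩
    exact (hD.of_equiv (equivSMul _ D)).sup_eq_of_not_dvd_relIndex hle hind
end

section
/- Let G be a finite group and D a subgroup. For g ∈ G and N a normal subgroup, D ⊆ g(DN)g^{-1} if and only if g ∈ N_G(DN). -/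
open scoped Pointwise

/-!
Since `N` is normal, `N ≤ g(DN)g⁻¹` always holds, so `D ≤ g(DN)g⁻¹` is equivalent to
`DN ≤ g(DN)g⁻¹`. Conjugation preserves cardinality, so in a finite group this inclusion is an
equality, i.e. `g` normalizes `DN`.
-/

namespace Subgroup

variable {G : Type*} [Group G]

theorem mem_normalizer_iff_conj_smul_eq {H : Subgroup G} {g : G} :
    g ∈ normalizer (H : Set G) ↔ MulAut.conj g • H = H := by
  rw [mem_normalizer_iff_conj_image_eq, ← SetLike.coe_set_eq (p := MulAut.conj g • H),
    coe_pointwise_smul, ← Set.image_smul]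
  rfl

theorem pointwise_smul_eq_of_le [Finite G] {A : Type*} [Group A] [MulDistribMulAction A G]
    {H : Subgroup G} (a : A) (h : H ≤ a • H) : a • H = H :=
  (eq_of_le_of_card_ge h (Nat.card_congr (equivSMul a H).toEquiv).ge).symm

theorem Normal.le_conj_smul_of_le {N H : Subgroup G} [hN : N.Normal] (hNH : N ≤ H) (g : G) :
    N ≤ MulAut.conj g • H := by
  rw [← hN.conj_smul_eq_self g]
  exact pointwise_smul_le_pointwise_smul_iff.mpr hNH

end Subgroup

theorem stmt_13_general (G : Type*) [Group G] [Finite G]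
    (D N : Subgroup G) [N.Normal] (g : G) :
    D ≤ MulAut.conj g • (D ⊔ N) ↔ g ∈ Subgroup.normalizer ((D ⊔ N : Subgroup G) : Set G) := by
  rw [Subgroup.mem_normalizer_iff_conj_smul_eq]
  refine ⟨fun hD => Subgroup.pointwise_smul_eq_of_le _ ?_, fun hg => hg.symm ▸ le_sup_left⟩
  exact sup_le hD (Subgroup.Normal.le_conj_smul_of_le le_sup_right g)

/-- for `D` a `p`-subgroup of the finite group `G` which is a Sylow
`p`-subgroup of `DN` (`N` normal), and any `g ∈ G`:
`D ⊆ g(DN)g⁻¹` if and only if `g ∈ N_G(DN)`. -/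
theorem stmt_13 (p : ℕ) [Fact p.Prime] (G : Type*) [Group G] [Finite G]
    (D N : Subgroup G) [N.Normal] (hD : IsPGroup p D)
    (hSyl : ¬ p ∣ (D.subgroupOf (D ⊔ N)).index) (g : G) :
    D ≤ MulAut.conj g • (D ⊔ N) ↔ g ∈ Subgroup.normalizer ((D ⊔ N : Subgroup G) : Set G) :=
  stmt_13_general G D N g
end
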